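/- Assume Assumption 1 holds and fix a positive integer q. If ⟨C, Ψ_l⟩_𝒮 ≠ 0 for some l > q, then with probability 1, ι(Ĉ_n, δ_n) > q for all sufficiently large n. -/

import Mathlib

/-!
For `j ≤ l` the residual `Ĉ_n - P_j Ĉ_n` still carries the coefficient `⟨Ĉ_n, Ψ_l⟩`, so
`‖Ĉ_n - P_j Ĉ_n‖ ≥ |⟨Ĉ_n, Ψ_l⟩| ≥ |⟨C, Ψ_l⟩| - ‖Ĉ_n - C‖ > |⟨C, Ψ_l⟩| - ℛ(n)` eventually, almost
surely. Once `(2 + ε) ℛ(n) < |⟨C, Ψ_l⟩|` this exceeds `δ_n = (1 + ε) ℛ(n)`, so no `j ≤ q ≤ l` is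
admissible in the definition of `ι(Ĉ_n, δ_n)`.
-/

open MeasureTheory Filter
open scoped RealInnerProductSpace

variable {𝒮 : Type*} [NormedAddCommGroup 𝒮] [InnerProductSpace ℝ 𝒮]

/-- `P_j(S) = ∑_{l=1}^{j} ⟨S, Ψ_l⟩ Ψ_l`, the orthogonal projection of `S` onto
`W_j = span {Ψ_1, …, Ψ_j}` (indices `0, …, j-1` in `0`-indexed notation). -/
noncomputable def basisProj (Ψ : HilbertBasis ℕ ℝ 𝒮) (j : ℕ) (S : 𝒮) : 𝒮 :=
  ∑ l ∈ Finset.range j, ⟪S, Ψ l⟫ • Ψ l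

/-- `W_j = span {Ψ_1, …, Ψ_j}` (i.e. the span of `Ψ 0, …, Ψ (j-1)`). -/
def basisSpan (Ψ : HilbertBasis ℕ ℝ 𝒮) (j : ℕ) : Submodule ℝ 𝒮 :=
  Submodule.span ℝ ((fun l => Ψ l) '' Set.Iio j)

/-- `ι(S, δ) = min {j ≥ 1 : ‖S - P_j(S)‖_𝒮 < δ}`. -/
noncomputable def iotaDim (Ψ : HilbertBasis ℕ ℝ 𝒮) (S : 𝒮) (δ : ℝ) : ℕ :=
  sInf {j | 1 ≤ j ∧ ‖S - basisProj Ψ j S‖ < δ}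

lemma abs_inner_sub_abs_inner_le (x y e : 𝒮) :
    |⟪x, e⟫| - |⟪y, e⟫| ≤ ‖x - y‖ * ‖e‖ :=
  calc |⟪x, e⟫| - |⟪y, e⟫| ≤ |⟪x, e⟫ - ⟪y, e⟫| := abs_sub_abs_le_abs_sub _ _
    _ = |⟪x - y, e⟫| := by rw [inner_sub_left]
    _ ≤ ‖x - y‖ * ‖e‖ := abs_real_inner_le_norm _ _

section basisProj

variable (Ψ : HilbertBasis ℕ ℝ 𝒮) (S : 𝒮)

lemma inner_sub_basisProj_of_le {j l : ℕ} (hjl : j ≤ l) :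
    ⟪S - basisProj Ψ j S, Ψ l⟫ = ⟪S, Ψ l⟫ := by
  have hortho : ∀ i ∈ Finset.range j, ⟪⟪S, Ψ i⟫ • Ψ i, Ψ l⟫ = 0 := fun i hi => by
    rw [inner_smul_left, Ψ.orthonormal.2 (by grind), mul_zero]
  rw [inner_sub_left, basisProj, sum_inner, Finset.sum_eq_zero hortho, sub_zero]

lemma abs_inner_le_norm_sub_basisProj {j l : ℕ} (hjl : j ≤ l) :
    |⟪S, Ψ l⟫| ≤ ‖S - basisProj Ψ j S‖ := by
  simpa [inner_sub_basisProj_of_le Ψ S hjl, Ψ.orthonormal.1 l] using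
    abs_real_inner_le_norm (S - basisProj Ψ j S) (Ψ l)

lemma tendsto_basisProj : Tendsto (fun j => basisProj Ψ j S) atTop (nhds S) := by
  have hsum : HasSum (fun i => ⟪S, Ψ i⟫ • Ψ i) S := by
    simpa [Ψ.repr_apply_apply, real_inner_comm] using Ψ.hasSum_repr S
  exact hsum.tendsto_sum_nat

lemma norm_sub_basisProj_iotaDim_lt {δ : ℝ} (hδ : 0 < δ) :
    ‖S - basisProj Ψ (iotaDim Ψ S δ) S‖ < δ := by
  have hclose : ∀ᶠ j in atTop, ‖S - basisProj Ψ j S‖ < δ := by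
    simpa [dist_eq_norm'] using (tendsto_basisProj Ψ S).eventually (Metric.ball_mem_nhds S hδ)
  obtain ⟨j, hj⟩ := ((eventually_ge_atTop 1).and hclose).exists
  exact (Nat.sInf_mem (s := {j | 1 ≤ j ∧ ‖S - basisProj Ψ j S‖ < δ}) ⟨j, hj⟩).2

lemma lt_iotaDim_of_le_abs_inner {δ : ℝ} (hδ : 0 < δ) {q l : ℕ} (hql : q ≤ l)
    (hcoeff : δ ≤ |⟪S, Ψ l⟫|) : q < iotaDim Ψ S δ := by
  by_contra! hle
  have := abs_inner_le_norm_sub_basisProj Ψ S (hle.trans hql)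
  linarith [norm_sub_basisProj_iotaDim_lt Ψ S hδ]

end basisProj

theorem expansion_exceeds_q_detection_general
    {𝒮 : Type*} [NormedAddCommGroup 𝒮] [InnerProductSpace ℝ 𝒮]
    {Ω : Type*} [MeasurableSpace Ω] (ℙ : Measure Ω)
    (Ψ : HilbertBasis ℕ ℝ 𝒮)
    (Chat : ℕ → Ω → 𝒮)
    (C : 𝒮)
    (R : ℕ → ℝ)
    (hRlim : Tendsto R atTop (nhds 0))
    (hrate : ∀ᵐ ω ∂ℙ, ∀ᶠ n in atTop, ‖Chat n ω - C‖ < R n)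
    (ε : ℝ) (hε : 0 < ε) (δ : ℕ → ℝ) (hδ : ∀ n, δ n = (1 + ε) * R n)
    (q : ℕ) (hbig : ∃ l, q ≤ l ∧ ⟪C, Ψ l⟫ ≠ 0) :
    ∀ᵐ ω ∂ℙ, ∀ᶠ n in atTop, q < iotaDim Ψ (Chat n ω) (δ n) := by
  obtain ⟨l, hql, hCl⟩ := hbig
  have hRsmall : ∀ᶠ n in atTop, (2 + ε) * R n < |⟪C, Ψ l⟫| := by
    have hlim : Tendsto (fun n => (2 + ε) * R n) atTop (nhds 0) := by
      simpa using hRlim.const_mul (2 + ε)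
    exact hlim.eventually (eventually_lt_nhds (abs_pos.mpr hCl))
  filter_upwards [hrate] with ω hω
  filter_upwards [hω, hRsmall] with n hn hRn
  have hR : 0 < R n := (norm_nonneg _).trans_lt hn
  have hcoeff : |⟪C, Ψ l⟫| - |⟪Chat n ω, Ψ l⟫| ≤ ‖Chat n ω - C‖ := by
    simpa [norm_sub_rev, Ψ.orthonormal.1 l] using abs_inner_sub_abs_inner_le C (Chat n ω) (Ψ l)
  refine lt_iotaDim_of_le_abs_inner Ψ (Chat n ω) (by rw [hδ]; positivity) hql ?_
  rw [hδ]
  linarith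

/-- Under Assumption 1, if `⟨C, Ψ_l⟩ ≠ 0` for some `l > q` (`1`-indexed,
i.e. `⟪C, Ψ l⟫ ≠ 0` for some `0`-indexed `l ≥ q`), then almost surely `ι(Ĉ_n, δ_n) > q`
for all sufficiently large `n`. -/
theorem expansion_exceeds_q_detection
    {𝒮 : Type*} [NormedAddCommGroup 𝒮] [InnerProductSpace ℝ 𝒮]
    {Ω : Type*} [MeasurableSpace Ω] (ℙ : Measure Ω) [IsProbabilityMeasure ℙ]
    [MeasurableSpace 𝒮] [BorelSpace 𝒮]
    (Ψ : HilbertBasis ℕ ℝ 𝒮)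
    (Chat : ℕ → Ω → 𝒮) (hChat : ∀ n, Measurable (Chat n))
    (C : 𝒮)
    (R : ℕ → ℝ) (hRpos : ∀ n, 0 < R n) (hRanti : StrictAnti R)
    (hRlim : Tendsto R atTop (nhds 0))
    (hrate : ∀ᵐ ω ∂ℙ, ∀ᶠ n in atTop, ‖Chat n ω - C‖ < R n)
    (ε : ℝ) (hε : 0 < ε) (δ : ℕ → ℝ) (hδ : ∀ n, δ n = (1 + ε) * R n)
    (q : ℕ) (hq : 1 ≤ q) (hbig : ∃ l, q ≤ l ∧ ⟪C, Ψ l⟫ ≠ 0) :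
    ∀ᵐ ω ∂ℙ, ∀ᶠ n in atTop, q < iotaDim Ψ (Chat n ω) (δ n) :=
  expansion_exceeds_q_detection_general ℙ Ψ Chat C R hRlim hrate ε hε δ hδ q hbig
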